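/- Let H_K, H_0, H_Ω be Hilbert spaces, E0K : H_K → H_0 bounded linear, and let E0Ω : H_Ω → H_0, EΩ0 : H_0 → H_Ω be bounded linear maps satisfying (E0Ω f, E0Ω g)_0 = (f,g)_Ω for all f,g ∈ H_Ω and (f, E0Ω g)_0 = (EΩ0 f, g)_Ω for all f ∈ H_0, g ∈ H_Ω. Let Π be an orthogonal projector on H_K. Assume f ∈ H_K satisfies: (i) there is v ∈ H_0 with (f,g)_K = (v, E0K g)_0 for all g ∈ H_K; (ii) v = E0Ω(EΩ0 v); (iii) ‖EΩ0(E0K(f − Πf))‖_Ω ≤ ε‖f − Πf‖_K. Then ‖EΩ0(E0K(f − Πf))‖_Ω ≤ ε²‖v‖_0. -/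

import Mathlib

/-!
Write `e = f - Πf`. Since `e ⊥ S`, condition (i) gives `‖e‖² = ⟪f, e⟫ = ⟪v, E0K e⟫`, and because
`v` is extended from `Ω` this pairing only sees the restriction of `E0K e` to `Ω`:
`‖e‖² ≤ ‖v‖ ‖EΩ0 (E0K e)‖ ≤ ε ‖v‖ ‖e‖`. Hence `‖e‖ ≤ ε ‖v‖`, and applying (iii) once more gives
the bound `ε² ‖v‖`.
-/

open scoped RealInnerProductSpace

theorem le_sq_mul_of_le_mul_of_sq_le_mul {x y n ε : ℝ} (hx : 0 ≤ x) (hn : 0 ≤ n)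
    (hyx : y ≤ ε * x) (hxy : x ^ 2 ≤ n * y) : y ≤ ε ^ 2 * n := by
  rcases hx.eq_or_lt with rfl | hx
  · nlinarith [sq_nonneg ε]
  · have hxn : x ≤ n * ε := le_of_mul_le_mul_right (by nlinarith) hx
    have hε : 0 ≤ ε := by nlinarith
    nlinarith

theorem Submodule.real_inner_self_sub_starProjection {E : Type*} [NormedAddCommGroup E]
    [InnerProductSpace ℝ E] (K : Submodule ℝ E) [K.HasOrthogonalProjection] (f : E) :
    ⟪f, f - K.starProjection f⟫ = ‖f - K.starProjection f‖ ^ 2 := by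
  have hperp : ⟪f - K.starProjection f, K.starProjection f⟫ = 0 :=
    K.starProjection_inner_eq_zero f _ (K.starProjection_apply_mem f)
  rw [← real_inner_self_eq_norm_sq, inner_sub_left f, real_inner_comm _ (K.starProjection f),
    hperp, sub_zero]

theorem real_inner_le_norm_mul_norm_restrict {H0 HΩ : Type*}
    [NormedAddCommGroup H0] [InnerProductSpace ℝ H0]
    [NormedAddCommGroup HΩ] [InnerProductSpace ℝ HΩ]
    (E0Ω : HΩ →L[ℝ] H0) (EΩ0 : H0 →L[ℝ] HΩ)
    (hiso : ∀ f g : HΩ, ⟪E0Ω f, E0Ω g⟫ = ⟪f, g⟫)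
    (hadj : ∀ (f : H0) (g : HΩ), ⟪f, E0Ω g⟫ = ⟪EΩ0 f, g⟫)
    {v : H0} (hloc : v = E0Ω (EΩ0 v)) (w : H0) :
    ⟪v, w⟫ ≤ ‖v‖ * ‖EΩ0 w‖ := by
  have hnorm : ‖EΩ0 v‖ = ‖v‖ := by
    conv_rhs => rw [hloc]
    exact ((LinearMap.norm_map_iff_inner_map_map E0Ω).mpr hiso _).symm
  calc ⟪v, w⟫ = ⟪EΩ0 w, EΩ0 v⟫ := by rw [hloc, real_inner_comm, hadj, ← hloc]
    _ ≤ ‖EΩ0 w‖ * ‖EΩ0 v‖ := real_inner_le_norm _ _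
    _ = ‖v‖ * ‖EΩ0 w‖ := by rw [hnorm, mul_comm]

theorem localized_superconvergence_general
    {HK H0 HΩ : Type*}
    [NormedAddCommGroup HK] [InnerProductSpace ℝ HK]
    [NormedAddCommGroup H0] [InnerProductSpace ℝ H0]
    [NormedAddCommGroup HΩ] [InnerProductSpace ℝ HΩ]
    (E0K : HK →L[ℝ] H0) (E0Ω : HΩ →L[ℝ] H0) (EΩ0 : H0 →L[ℝ] HΩ)
    (hiso : ∀ f g : HΩ, ⟪E0Ω f, E0Ω g⟫ = ⟪f, g⟫)
    (hadj : ∀ (f : H0) (g : HΩ), ⟪f, E0Ω g⟫ = ⟪EΩ0 f, g⟫)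
    (S : Submodule ℝ HK) [CompleteSpace S]
    (ε : ℝ)
    (f : HK) (v : H0)
    (hconv : ∀ g : HK, ⟪f, g⟫ = ⟪v, E0K g⟫)
    (hloc : v = E0Ω (EΩ0 v))
    (hstd : ‖EΩ0 (E0K (f - (S.orthogonalProjection f : HK)))‖
      ≤ ε * ‖f - (S.orthogonalProjection f : HK)‖) :
    ‖EΩ0 (E0K (f - (S.orthogonalProjection f : HK)))‖ ≤ ε ^ 2 * ‖v‖ := by
  set e : HK := f - S.starProjection f
  have he : ‖e‖ ^ 2 ≤ ‖v‖ * ‖EΩ0 (E0K e)‖ :=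
    calc ‖e‖ ^ 2 = ⟪f, e⟫ := (S.real_inner_self_sub_starProjection f).symm
      _ = ⟪v, E0K e⟫ := hconv e
      _ ≤ ‖v‖ * ‖EΩ0 (E0K e)‖ := real_inner_le_norm_mul_norm_restrict E0Ω EΩ0 hiso hadj hloc _
  exact le_sq_mul_of_le_mul_of_sq_le_mul (norm_nonneg e) (norm_nonneg v) hstd he

/-- Localized superconvergence (Theorem 2.6): under the localization axioms on the
extension/restriction maps `E0Ω`, `EΩ0`, the convolution condition (i), the
localization condition (ii), and the partially localized standard error bound (iii),
one has `‖EΩ0(E0K(f - Πf))‖_Ω ≤ ε² ‖v‖₀`. -/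
theorem localized_superconvergence
    {HK H0 HΩ : Type*}
    [NormedAddCommGroup HK] [InnerProductSpace ℝ HK] [CompleteSpace HK]
    [NormedAddCommGroup H0] [InnerProductSpace ℝ H0] [CompleteSpace H0]
    [NormedAddCommGroup HΩ] [InnerProductSpace ℝ HΩ] [CompleteSpace HΩ]
    (E0K : HK →L[ℝ] H0) (E0Ω : HΩ →L[ℝ] H0) (EΩ0 : H0 →L[ℝ] HΩ)
    (hiso : ∀ f g : HΩ, ⟪E0Ω f, E0Ω g⟫ = ⟪f, g⟫)
    (hadj : ∀ (f : H0) (g : HΩ), ⟪f, E0Ω g⟫ = ⟪EΩ0 f, g⟫)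
    (S : Submodule ℝ HK) [CompleteSpace S]
    (ε : ℝ) (hε : 0 ≤ ε)
    (f : HK) (v : H0)
    (hconv : ∀ g : HK, ⟪f, g⟫ = ⟪v, E0K g⟫)
    (hloc : v = E0Ω (EΩ0 v))
    (hstd : ‖EΩ0 (E0K (f - (S.orthogonalProjection f : HK)))‖
      ≤ ε * ‖f - (S.orthogonalProjection f : HK)‖) :
    ‖EΩ0 (E0K (f - (S.orthogonalProjection f : HK)))‖ ≤ ε ^ 2 * ‖v‖ :=
  localized_superconvergence_general E0K E0Ω EΩ0 hiso hadj S ε f v hconv hloc hstd
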